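/- arXiv:2008.05947 — 2 statements merged into one kernel-verified Lean document; each statement's English description precedes it below -/
import Mathlib

section
/- Let x₁,…,xₘ be points in a complex Hilbert space H and let a₁,…,aₘ be complex numbers with |aⱼ| ≤ 1 for 1 ≤ j ≤ m. Then there exist complex numbers b₁,…,bₘ with |bⱼ| = 1 for 1 ≤ j ≤ m satisfying ‖∑_{j=1}^m aⱼxⱼ − ∑_{j=1}^m bⱼxⱼ‖² ≤ 4·∑_{j=1}^m ‖xⱼ‖². -/
/-!
Write `a = r u` with `|u| = 1` and `w = i √(1 - r²) u`; then `|w| ≤ 1` and `a ± w` are both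
unimodular, so it suffices to choose signs `εⱼ = ±1` with `‖∑ εⱼ wⱼ xⱼ‖² ≤ ∑ ‖xⱼ‖²` and put
`bⱼ = aⱼ - εⱼ wⱼ`. The signs are chosen greedily: by the parallelogram law, one of `‖u + v‖²`,
`‖u - v‖²` is at most `‖u‖² + ‖v‖²`.
-/

open Finset

section Signs

variable {𝕜 E : Type*} [RCLike 𝕜] [SeminormedAddCommGroup E] [InnerProductSpace 𝕜 E]

lemma exists_sign_norm_add_smul_sq_le (u v : E) :
    ∃ ε : 𝕜, (ε = 1 ∨ ε = -1) ∧ ‖u + ε • v‖ ^ 2 ≤ ‖u‖ ^ 2 + ‖v‖ ^ 2 := by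
  have hpar := parallelogram_law_with_norm 𝕜 u v
  rcases le_total ‖u + v‖ ‖u - v‖ with h | h
  · refine ⟨1, .inl rfl, ?_⟩
    rw [one_smul]
    nlinarith [norm_nonneg (u + v)]
  · refine ⟨-1, .inr rfl, ?_⟩
    rw [neg_one_smul, ← sub_eq_add_neg]
    nlinarith [norm_nonneg (u - v)]

lemma exists_signs_norm_sum_smul_sq_le {ι : Type*} (s : Finset ι) (y : ι → E) :
    ∃ ε : ι → 𝕜, (∀ j, ε j = 1 ∨ ε j = -1) ∧
      ‖∑ j ∈ s, ε j • y j‖ ^ 2 ≤ ∑ j ∈ s, ‖y j‖ ^ 2 := by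
  classical
  induction s using Finset.induction_on with
  | empty => exact ⟨fun _ => 1, fun _ => .inl rfl, by simp⟩
  | insert i s hi ih =>
    obtain ⟨ε, hε, hbound⟩ := ih
    obtain ⟨δ, hδ, hstep⟩ := exists_sign_norm_add_smul_sq_le (𝕜 := 𝕜) (∑ j ∈ s, ε j • y j) (y i)
    refine ⟨Function.update ε i δ, fun j => ?_, ?_⟩
    · rcases eq_or_ne j i with rfl | hj
      · simpa using hδ
      · simpa [Function.update_of_ne hj] using hε j
    · have hrest : ∑ j ∈ s, Function.update ε i δ j • y j = ∑ j ∈ s, ε j • y j :=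
        sum_congr rfl fun j hj => by rw [Function.update_of_ne (ne_of_mem_of_not_mem hj hi)]
      rw [sum_insert hi, sum_insert hi, hrest, Function.update_self, add_comm]
      linarith

end Signs

lemma Complex.exists_norm_add_eq_one_and_norm_sub_eq_one {a : ℂ} (ha : ‖a‖ ≤ 1) :
    ∃ w : ℂ, ‖w‖ ≤ 1 ∧ ‖a + w‖ = 1 ∧ ‖a - w‖ = 1 := by
  set r := ‖a‖
  set s := √(1 - r ^ 2)
  set u := exp (arg a * I)
  have hs : s ^ 2 = 1 - r ^ 2 := Real.sq_sqrt (by nlinarith [norm_nonneg a])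
  have hau : a = r * u := (norm_mul_exp_arg_mul_I a).symm
  have hu : ‖u‖ = 1 := norm_exp_ofReal_mul_I _
  have hunit : ∀ t : ℝ, t ^ 2 = s ^ 2 → ‖(r + t * I) * u‖ = 1 := fun t ht => by
    rw [norm_mul, hu, mul_one, norm_add_mul_I, ht, hs, add_sub_cancel, Real.sqrt_one]
  refine ⟨s * I * u, ?_, ?_, ?_⟩
  · rw [norm_mul, norm_mul, hu, norm_I, norm_real, Real.norm_of_nonneg (Real.sqrt_nonneg _),
      mul_one, mul_one]
    nlinarith [norm_nonneg a]
  · rw [← hunit s rfl, hau]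
    ring_nf
  · rw [← hunit (-s) (neg_sq s), hau]
    push_cast
    ring_nf

theorem statement6_general
    {H : Type*} [NormedAddCommGroup H] [InnerProductSpace ℂ H]
    (m : ℕ) (x : Fin m → H) (a : Fin m → ℂ)
    (ha : ∀ j, ‖a j‖ ≤ 1) :
    ∃ b : Fin m → ℂ, (∀ j, ‖b j‖ = 1) ∧
      ‖(∑ j, a j • x j) - ∑ j, b j • x j‖ ^ 2 ≤ 4 * ∑ j, ‖x j‖ ^ 2 := by
  choose w hw hadd hsub using fun j => Complex.exists_norm_add_eq_one_and_norm_sub_eq_one (ha j)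
  obtain ⟨ε, hε, hbound⟩ := exists_signs_norm_sum_smul_sq_le (𝕜 := ℂ) univ (fun j => w j • x j)
  refine ⟨fun j => a j - ε j * w j, fun j => ?_, ?_⟩
  · rcases hε j with h | h <;> simp [h, hadd, hsub]
  have hdiff : (∑ j, a j • x j) - ∑ j, (a j - ε j * w j) • x j = ∑ j, ε j • w j • x j := by
    rw [← sum_sub_distrib]
    exact sum_congr rfl fun j _ => by rw [sub_smul, sub_sub_cancel, mul_smul]
  have hw_x : ∀ j, ‖w j • x j‖ ^ 2 ≤ ‖x j‖ ^ 2 := fun j => by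
    rw [norm_smul]
    gcongr
    exact mul_le_of_le_one_left (norm_nonneg _) (hw j)
  calc ‖(∑ j, a j • x j) - ∑ j, (a j - ε j * w j) • x j‖ ^ 2
      ≤ ∑ j, ‖w j • x j‖ ^ 2 := hdiff ▸ hbound
    _ ≤ ∑ j, ‖x j‖ ^ 2 := sum_le_sum fun j _ => hw_x j
    _ ≤ 4 * ∑ j, ‖x j‖ ^ 2 := le_mul_of_one_le_left (by positivity) (by norm_num)

/-- **Lemma 3 (Hilbert space lemma).** Coefficients of modulus at most one in front of
vectors of a complex Hilbert space can be replaced by unimodular ones with controlled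
error. -/
theorem statement6
    {H : Type*} [NormedAddCommGroup H] [InnerProductSpace ℂ H] [CompleteSpace H]
    (m : ℕ) (x : Fin m → H) (a : Fin m → ℂ)
    (ha : ∀ j, ‖a j‖ ≤ 1) :
    ∃ b : Fin m → ℂ, (∀ j, ‖b j‖ = 1) ∧
      ‖(∑ j, a j • x j) - ∑ j, b j • x j‖ ^ 2 ≤ 4 * ∑ j, ‖x j‖ ^ 2 :=
  statement6_general m x a ha
end

section
/- Let N ≥ 2, let a_p be complex numbers with |a_p| = 1 for each prime 2 ≤ p ≤ N, and let ε > 0. Then liminf_{T→∞} (1/T)·Leb{t ∈ [0,T] : max_{2≤p≤N, p prime} |p^{it} − a_p| < ε} > 0, where Leb denotes Lebesgue measure. -/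
/-!
For a finite family of frequencies `ℓ i` that are linearly independent over `ℤ` and phases
`θ i`, consider the kernel `F t = ∏ i, cos² ((ℓ i t - θ i) / 2) ^ n`. Expanding each factor
binomially writes `F` as a trigonometric polynomial whose frequencies `∑ i, j i ℓ i` vanish only
for `j = 0`, so the mean value of `F` is `(C(2n, n) / 4ⁿ) ^ k ≥ (2n + 1)⁻ᵏ`. On the other hand
`cos² ((α - β) / 2) = 1 - |e^{iα} - e^{iβ}|² / 4`, so `F t ≤ (1 - ε² / 4) ^ n` as soon as one of
the points `e^{i ℓ i t}` is `ε`-far from its target `e^{i θ i}`, and `F ≤ 1` everywhere. Hence the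
set of good `t` has lower density at least `(2n + 1)⁻ᵏ - (1 - ε² / 4) ^ n`, which is positive for
large `n`. The frequencies `log p` are linearly independent by unique factorisation, and
`p^{it} = e^{i t log p}`.
-/

open Filter MeasureTheory Complex Topology Set

theorem linearIndependent_log_primes :
    LinearIndependent ℤ (fun p : Nat.Primes => Real.log p) := by
  classical
  have log_prod (s : Finset Nat.Primes) (e : Nat.Primes → ℕ) :
      ∑ p ∈ s, (e p : ℝ) * Real.log p = Real.log (∏ p ∈ s, (p : ℕ) ^ e p : ℕ) := by
    push_cast
    rw [Real.log_prod fun p _ => pow_ne_zero _ (Nat.cast_ne_zero.2 p.2.ne_zero)]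
    simp [Real.log_pow]
  have factorization_prod (s : Finset Nat.Primes) (e : Nat.Primes → ℕ) {q : Nat.Primes}
      (hq : q ∈ s) : (∏ p ∈ s, (p : ℕ) ^ e p).factorization q = e q := by
    rw [Nat.factorization_prod fun p _ => pow_ne_zero _ p.2.ne_zero, Finset.sum_apply',
      Finset.sum_eq_single_of_mem q hq fun p _ hpq => ?_]
    · simp [q.2.factorization_pow]
    · simp [p.2.factorization_pow, Nat.Primes.coe_nat_inj, hpq]
  refine linearIndependent_iff'.2 fun s g hg q hq => ?_
  have hsplit : ∑ p ∈ s, ((g p).toNat : ℝ) * Real.log p =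
      ∑ p ∈ s, ((-g p).toNat : ℝ) * Real.log p := by
    rw [← sub_eq_zero, ← Finset.sum_sub_distrib, ← hg]
    refine Finset.sum_congr rfl fun p _ => ?_
    rw [← sub_mul, zsmul_eq_mul]
    congr 1
    exact_mod_cast Int.toNat_sub_toNat_neg (g p)
  rw [log_prod, log_prod] at hsplit
  have hprod := Nat.cast_injective (R := ℝ) <| Real.log_injOn_pos
    (Set.mem_Ioi.2 <| Nat.cast_pos.2 <| Finset.prod_pos fun p _ => pow_pos p.2.pos _)
    (Set.mem_Ioi.2 <| Nat.cast_pos.2 <| Finset.prod_pos fun p _ => pow_pos p.2.pos _) hsplit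
  have hq_exp := congrArg (fun m => m.factorization q) hprod
  simp only [factorization_prod s _ hq] at hq_exp
  omega

theorem natCast_cpow_I_mul {p : ℕ} (hp : p ≠ 0) (t : ℝ) :
    (p : ℂ) ^ (I * t) = cexp (↑(Real.log p * t) * I) := by
  rw [cpow_def_of_ne_zero (Nat.cast_ne_zero.2 hp), ← natCast_log]
  push_cast
  ring_nf

theorem Finset.prod_le_of_le_one {ι R : Type*} [CommMonoidWithZero R] [Preorder R]
    [ZeroLEOneClass R] [PosMulMono R] {f : ι → R} {s : Finset ι} (h0 : ∀ i ∈ s, 0 ≤ f i)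
    (h1 : ∀ i ∈ s, f i ≤ 1) {i : ι} (hi : i ∈ s) : ∏ j ∈ s, f j ≤ f i := by
  classical
  rw [← Finset.mul_prod_erase s f hi]
  exact mul_le_of_le_one_right (h0 i hi) <| Finset.prod_le_one
    (fun j hj => h0 j (Finset.mem_of_mem_erase hj)) fun j hj => h1 j (Finset.mem_of_mem_erase hj)

def HasMeanValue {E : Type*} [NormedAddCommGroup E] [NormedSpace ℝ E] (f : ℝ → E) (m : E) :
    Prop :=
  Tendsto (fun T : ℝ => T⁻¹ • ∫ t in (0 : ℝ)..T, f t) atTop (𝓝 m)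

theorem hasMeanValue_ofReal_iff {f : ℝ → ℝ} {m : ℝ} :
    HasMeanValue (fun t => (f t : ℂ)) m ↔ HasMeanValue f m := by
  simp only [HasMeanValue, intervalIntegral.integral_ofReal, real_smul, ← ofReal_mul,
    tendsto_ofReal_iff, smul_eq_mul]

theorem hasMeanValue_cexp_mul_I (ω : ℝ) :
    HasMeanValue (fun t : ℝ => cexp (ω * t * I)) (if ω = 0 then 1 else 0) := by
  unfold HasMeanValue
  split_ifs with hω
  · refine tendsto_const_nhds.congr' ?_
    filter_upwards [eventually_ne_atTop 0] with T hT
    simp [hω, hT]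
  · have hωI : (ω : ℂ) * I ≠ 0 := mul_ne_zero (ofReal_ne_zero.2 hω) I_ne_zero
    refine tendsto_inv_atTop_zero.zero_smul_isBoundedUnder_le <|
      isBoundedUnder_of ⟨2 / ‖(ω : ℂ) * I‖, fun T => ?_⟩
    change ‖∫ t in (0 : ℝ)..T, cexp (ω * t * I)‖ ≤ _
    simp_rw [mul_right_comm _ _ I]
    rw [integral_exp_mul_complex hωI, ofReal_zero, mul_zero, Complex.exp_zero, norm_div]
    gcongr
    calc ‖cexp (ω * I * T) - 1‖ ≤ ‖cexp (ω * I * T)‖ + ‖(1 : ℂ)‖ := norm_sub_le _ _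
      _ = 2 := by rw [mul_right_comm, ← ofReal_mul, norm_exp_ofReal_mul_I]; norm_num

theorem hasMeanValue_sum_cexp {α : Type*} (s : Finset α) (c : α → ℂ) (ω : α → ℝ) :
    HasMeanValue (fun t : ℝ => ∑ a ∈ s, c a * cexp (ω a * t * I))
      (∑ a ∈ s with ω a = 0, c a) := by
  have hint (T : ℝ) (a : α) :
      IntervalIntegrable (fun t : ℝ => c a * cexp (ω a * t * I)) volume 0 T :=
    Continuous.intervalIntegrable (by fun_prop) _ _
  have h := tendsto_finsetSum s fun a _ => (hasMeanValue_cexp_mul_I (ω a)).const_smul (c a)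
  simp only [smul_eq_mul, mul_ite, mul_one, mul_zero, ← Finset.sum_filter] at h
  refine h.congr fun T => ?_
  rw [intervalIntegral.integral_finsetSum fun a _ => hint T a, Finset.smul_sum]
  refine Finset.sum_congr rfl fun a _ => ?_
  rw [intervalIntegral.integral_const_mul, mul_smul_comm]

theorem hasMeanValue_prod_sum_cexp {ι : Type*} [Fintype ι] {ℓ : ι → ℝ}
    (hℓ : LinearIndependent ℤ ℓ) {s : Finset ℤ} (hs : 0 ∈ s) (c : ι → ℤ → ℂ) :
    HasMeanValue (fun t : ℝ => ∏ i, ∑ j ∈ s, c i j * cexp (j * ℓ i * t * I)) (∏ i, c i 0) := by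
  classical
  have hexpand (t : ℝ) : ∏ i, ∑ j ∈ s, c i j * cexp (j * ℓ i * t * I) =
      ∑ J ∈ Fintype.piFinset fun _ => s,
        (∏ i, c i (J i)) * cexp (↑(∑ i, (J i : ℝ) * ℓ i) * t * I) := by
    rw [Finset.prod_univ_sum]
    refine Finset.sum_congr rfl fun J _ => ?_
    rw [Finset.prod_mul_distrib, ← Complex.exp_sum]
    push_cast
    rw [Finset.sum_mul, Finset.sum_mul]
  have hfreq : {J ∈ Fintype.piFinset fun _ : ι => s | ∑ i, (J i : ℝ) * ℓ i = 0} = {0} := by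
    ext J
    simp only [Finset.mem_filter, Fintype.mem_piFinset, Finset.mem_singleton]
    constructor
    · rintro ⟨-, hJ⟩
      funext i
      exact Fintype.linearIndependent_iff.1 hℓ J (by simpa only [zsmul_eq_mul] using hJ) i
    · rintro rfl
      simp [hs]
  have h := hasMeanValue_sum_cexp (Fintype.piFinset fun _ => s) (fun J => ∏ i, c i (J i))
    (fun J => ∑ i, (J i : ℝ) * ℓ i)
  rw [hfreq, Finset.sum_singleton] at h
  simp_rw [hexpand]
  exact h

-- `(j + n).toNat` truncates, so only the values at `|j| ≤ n` are meaningful.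
noncomputable def cosSqPowCoeff (n : ℕ) (j : ℤ) : ℂ :=
  ((2 * n).choose (j + n).toNat : ℂ) / 4 ^ n

theorem cos_sq_half_pow_eq_sum (n : ℕ) (x : ℝ) :
    ((Real.cos (x / 2) ^ 2) ^ n : ℝ) =
      ∑ j ∈ Finset.Icc (-n : ℤ) n, cosSqPowCoeff n j * cexp (j * x * I) := by
  have hIcc : Finset.Icc (-n : ℤ) n =
      (Finset.range (2 * n + 1)).image fun k : ℕ => (k : ℤ) - n := by
    ext j
    simp only [Finset.mem_Icc, Finset.mem_image, Finset.mem_range]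
    constructor
    · rintro ⟨h₁, h₂⟩
      exact ⟨(j + n).toNat, by omega, by omega⟩
    · rintro ⟨k, hk, rfl⟩
      omega
  rw [hIcc, Finset.sum_image fun k _ l _ h => by simpa using h]
  have hcos : Complex.cos (x / 2) = (cexp (x / 2 * I) + cexp (-(x / 2) * I)) / 2 := by
    linear_combination Complex.two_cos (x / 2) / 2
  push_cast
  rw [hcos, div_pow, div_pow, ← pow_mul, ← pow_mul, add_pow, Finset.sum_div]
  refine Finset.sum_congr rfl fun k hk => ?_
  have hk : k ≤ 2 * n := Nat.lt_succ_iff.1 (Finset.mem_range.1 hk)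
  have hexp : cexp (x / 2 * I) ^ k * cexp (-(x / 2) * I) ^ (2 * n - k) =
      cexp ((k - n) * x * I) := by
    rw [← Complex.exp_nat_mul, ← Complex.exp_nat_mul, ← Complex.exp_add, Nat.cast_sub hk]
    push_cast
    ring_nf
  rw [hexp, cosSqPowCoeff, sub_add_cancel, Int.toNat_natCast, pow_mul]
  norm_num
  ring

theorem hasMeanValue_prod_cos_sq_pow {ι : Type*} [Fintype ι] {ℓ : ι → ℝ}
    (hℓ : LinearIndependent ℤ ℓ) (θ : ι → ℝ) (n : ℕ) :
    HasMeanValue (fun t => ∏ i, (Real.cos ((ℓ i * t - θ i) / 2) ^ 2) ^ n)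
      (((n.centralBinom : ℝ) / 4 ^ n) ^ Fintype.card ι) := by
  rw [← hasMeanValue_ofReal_iff]
  have hexpand (t : ℝ) : ((∏ i, (Real.cos ((ℓ i * t - θ i) / 2) ^ 2) ^ n : ℝ) : ℂ) =
      ∏ i, ∑ j ∈ Finset.Icc (-n : ℤ) n,
        cosSqPowCoeff n j * cexp (-(j * θ i) * I) * cexp (j * ℓ i * t * I) := by
    rw [Complex.ofReal_prod]
    refine Finset.prod_congr rfl fun i _ => ?_
    rw [cos_sq_half_pow_eq_sum]
    refine Finset.sum_congr rfl fun j _ => ?_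
    rw [mul_assoc _ (cexp _), ← Complex.exp_add]
    push_cast
    ring_nf
  simp_rw [hexpand]
  convert hasMeanValue_prod_sum_cexp hℓ (s := Finset.Icc (-n : ℤ) n) (by simp) _ using 1
  simp [cosSqPowCoeff, Nat.centralBinom_eq_two_mul_choose, div_pow]

theorem cos_sq_half_sub_eq (α β : ℝ) :
    Real.cos ((α - β) / 2) ^ 2 = 1 - ‖cexp (α * I) - cexp (β * I)‖ ^ 2 / 4 := by
  have h : cexp (α * I) - cexp (β * I) = cexp (β * I) * (cexp (I * ↑(α - β)) - 1) := by
    rw [mul_sub, mul_one, ← Complex.exp_add]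
    push_cast
    ring_nf
  rw [h, norm_mul, norm_exp_ofReal_mul_I, one_mul, norm_exp_I_mul_ofReal_sub_one, norm_mul,
    Real.norm_eq_abs, Real.norm_eq_abs, mul_pow, sq_abs, sq_abs]
  linarith [Real.sin_sq_add_cos_sq ((α - β) / 2)]

theorem exists_pow_lt_centralBinom_div_four_pow_pow {r : ℝ} (hr₀ : 0 ≤ r) (hr₁ : r < 1)
    (k : ℕ) : ∃ n : ℕ, r ^ n < ((n.centralBinom : ℝ) / 4 ^ n) ^ k := by
  have hlim : Tendsto (fun n : ℕ => 3 ^ k * ((n : ℝ) ^ k * r ^ n)) atTop (𝓝 0) := by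
    simpa using (tendsto_pow_const_mul_const_pow_of_abs_lt_one k
      (abs_lt.2 ⟨by linarith, hr₁⟩)).const_mul (3 ^ k : ℝ)
  obtain ⟨n, hn, hn₁⟩ := ((hlim.eventually_lt_const one_pos).and (eventually_ge_atTop 1)).exists
  refine ⟨n, ?_⟩
  have hcb : (1 / (2 * n + 1) : ℝ) ≤ n.centralBinom / 4 ^ n := by
    rw [div_le_div_iff₀ (by positivity) (by positivity), one_mul, mul_comm,
      Nat.centralBinom_eq_two_mul_choose]
    exact_mod_cast Nat.four_pow_le_two_mul_add_one_mul_central_binom n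
  have hpoly : (2 * n + 1 : ℝ) ^ k ≤ 3 ^ k * n ^ k := by
    rw [← mul_pow]
    gcongr
    have : (1 : ℝ) ≤ n := by exact_mod_cast hn₁
    linarith
  calc r ^ n < (1 / (2 * n + 1) : ℝ) ^ k := by
        rw [div_pow, one_pow, lt_div_iff₀ (by positivity)]
        nlinarith [pow_nonneg hr₀ n]
    _ ≤ _ := by gcongr

noncomputable def lowerDensity (S : Set ℝ) : ℝ :=
  liminf (fun T => volume.real (Icc 0 T ∩ S) / T) atTop

theorem integral_le_volume_Icc_inter_add {S : Set ℝ} (hS : MeasurableSet S) {F : ℝ → ℝ}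
    {η : ℝ} (hFS : ∀ t, F t ≤ S.indicator 1 t + η) {T : ℝ}
    (hF : IntervalIntegrable F volume 0 T) (hT : 0 ≤ T) :
    ∫ t in (0 : ℝ)..T, F t ≤ volume.real (Icc 0 T ∩ S) + η * T := by
  have hind : IntervalIntegrable (S.indicator 1) volume 0 T :=
    have h1 : IntervalIntegrable (1 : ℝ → ℝ) volume 0 T := intervalIntegrable_const
    ⟨h1.1.indicator hS, h1.2.indicator hS⟩
  calc ∫ t in (0 : ℝ)..T, F t ≤ ∫ t in (0 : ℝ)..T, (S.indicator 1 t + η) :=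
        intervalIntegral.integral_mono_on hT hF
          (hind.add intervalIntegrable_const) fun t _ => hFS t
    _ = volume.real (Ioc 0 T ∩ S) + η * T := by
        rw [intervalIntegral.integral_add hind (intervalIntegrable_const (μ := volume)),
          intervalIntegral.integral_of_le hT, integral_indicator_one hS,
          measureReal_restrict_apply hS, inter_comm, intervalIntegral.integral_const,
          smul_eq_mul, sub_zero, mul_comm]
    _ ≤ volume.real (Icc 0 T ∩ S) + η * T := by
        have hfin : volume (Icc 0 T ∩ S) ≠ ⊤ :=
          (measure_mono inter_subset_left |>.trans_lt measure_Icc_lt_top).ne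
        gcongr
        exact Ioc_subset_Icc_self

theorem sub_le_lowerDensity {S : Set ℝ} (hS : MeasurableSet S) {F : ℝ → ℝ}
    (hF : ∀ T, IntervalIntegrable F volume 0 T) {m η : ℝ} (hm : HasMeanValue F m)
    (hFS : ∀ t, F t ≤ S.indicator 1 t + η) : m - η ≤ lowerDensity S := by
  have hle : ∀ᶠ T in atTop,
      T⁻¹ • (∫ t in (0 : ℝ)..T, F t) - η ≤ volume.real (Icc 0 T ∩ S) / T := by
    filter_upwards [eventually_gt_atTop 0] with T hT
    rw [smul_eq_mul, sub_le_iff_le_add, inv_mul_le_iff₀ hT, mul_add, mul_div_cancel₀ _ hT.ne']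
    linarith [integral_le_volume_Icc_inter_add hS hFS (hF T) hT.le]
  have hle_one : ∀ᶠ T in atTop, volume.real (Icc 0 T ∩ S) / T ≤ 1 := by
    filter_upwards [eventually_gt_atTop 0] with T hT
    rw [div_le_one hT]
    calc volume.real (Icc 0 T ∩ S) ≤ volume.real (Icc 0 T) :=
          measureReal_mono inter_subset_left measure_Icc_lt_top.ne
      _ = T := by simp [hT.le]
  rw [← (hm.sub_const η).liminf_eq]
  exact liminf_le_liminf hle (hm.sub_const η).isBoundedUnder_ge
    (isBoundedUnder_of_eventually_le hle_one).isCoboundedUnder_flip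

theorem lowerDensity_pos_of_linearIndependent {ι : Type*} [Fintype ι] {ℓ : ι → ℝ}
    (hℓ : LinearIndependent ℤ ℓ) (θ : ι → ℝ) {ε : ℝ} (hε : 0 < ε) :
    0 < lowerDensity {t | ∀ i, ‖cexp (↑(ℓ i * t) * I) - cexp (θ i * I)‖ < ε} := by
  set S := {t : ℝ | ∀ i, ‖cexp (↑(ℓ i * t) * I) - cexp (θ i * I)‖ < ε}
  set r : ℝ := max 0 (1 - ε ^ 2 / 4)
  obtain ⟨n, hn⟩ := exists_pow_lt_centralBinom_div_four_pow_pow (le_max_left _ _)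
    (max_lt one_pos (by nlinarith : 1 - ε ^ 2 / 4 < 1)) (Fintype.card ι)
  set g : ι → ℝ → ℝ := fun i t => (Real.cos ((ℓ i * t - θ i) / 2) ^ 2) ^ n
  have hg₀ (t : ℝ) (i : ι) (_ : i ∈ Finset.univ) : 0 ≤ g i t := by positivity
  have hg₁ (t : ℝ) (i : ι) (_ : i ∈ Finset.univ) : g i t ≤ 1 :=
    pow_le_one₀ (sq_nonneg _) (Real.cos_sq_le_one _)
  have hFS (t : ℝ) : ∏ i, g i t ≤ S.indicator 1 t + r ^ n := by
    by_cases ht : t ∈ S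
    · rw [indicator_of_mem ht, Pi.one_apply]
      linarith [Finset.prod_le_one (hg₀ t) (hg₁ t), pow_nonneg (le_max_left 0 (1 - ε ^ 2 / 4)) n]
    · obtain ⟨i, hi⟩ : ∃ i, ε ≤ ‖cexp (↑(ℓ i * t) * I) - cexp (θ i * I)‖ := by
        simpa [S] using ht
      rw [indicator_of_notMem ht, zero_add]
      calc ∏ j, g j t ≤ g i t := Finset.prod_le_of_le_one (hg₀ t) (hg₁ t) (Finset.mem_univ i)
        _ ≤ r ^ n := by
          refine pow_le_pow_left₀ (sq_nonneg _) ?_ n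
          rw [cos_sq_half_sub_eq]
          exact le_max_of_le_right (by nlinarith)
  calc 0 < _ - r ^ n := sub_pos.2 hn
    _ ≤ lowerDensity S := sub_le_lowerDensity (by measurability)
      (fun T => Continuous.intervalIntegrable (by fun_prop) 0 T)
      (hasMeanValue_prod_cos_sq_pow hℓ θ n) hFS

theorem statement14_general
    (N : ℕ) (a : ℕ → ℂ)
    (ha : ∀ p : ℕ, p.Prime → p ≤ N → ‖a p‖ = 1)
    (ε : ℝ) (hε : 0 < ε) :
    0 < Filter.liminf (fun T : ℝ =>
        (volume {t : ℝ | t ∈ Set.Icc 0 T ∧ ∀ p : ℕ, p.Prime → p ≤ N →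
          ‖(p : ℂ) ^ (Complex.I * (t : ℂ)) - a p‖ < ε}).toReal / T)
      atTop := by
  set P : Finset ℕ := {p ∈ Finset.range (N + 1) | p.Prime}
  have hP {p : ℕ} : p ∈ P ↔ p.Prime ∧ p ≤ N := by simp [P, and_comm]
  have hℓ : LinearIndependent ℤ fun p : P => Real.log p :=
    linearIndependent_log_primes.comp (fun p : P => ⟨p, (hP.1 p.2).1⟩)
      fun p q h => Subtype.ext (congrArg (fun x : Nat.Primes => (x : ℕ)) h)
  have hS : {t : ℝ | ∀ p : P, ‖cexp (↑(Real.log p * t) * I) - cexp (arg (a p) * I)‖ < ε} =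
      {t : ℝ | ∀ p : ℕ, p.Prime → p ≤ N → ‖(p : ℂ) ^ (I * (t : ℂ)) - a p‖ < ε} := by
    ext t
    simp only [mem_ofPred_eq, Subtype.forall, hP, and_imp]
    refine forall₃_congr fun p hp hpN => ?_
    conv_rhs => rw [← norm_mul_exp_arg_mul_I (a p), ha p hp hpN, ofReal_one, one_mul]
    rw [natCast_cpow_I_mul hp.ne_zero]
  have h := lowerDensity_pos_of_linearIndependent hℓ (fun p => arg (a p)) hε
  rw [hS] at h
  exact h

/-- **Weyl's version of the Kronecker approximation theorem.** For unimodular targets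
`a_p` at the primes `p ≤ N`, the set of `t` with `|p^{it} - a_p| < ε` for all primes
`p ≤ N` has positive lower density. -/
theorem statement14
    (N : ℕ) (hN : 2 ≤ N) (a : ℕ → ℂ)
    (ha : ∀ p : ℕ, p.Prime → p ≤ N → ‖a p‖ = 1)
    (ε : ℝ) (hε : 0 < ε) :
    0 < Filter.liminf (fun T : ℝ =>
        (volume {t : ℝ | t ∈ Set.Icc 0 T ∧ ∀ p : ℕ, p.Prime → p ≤ N →
          ‖(p : ℂ) ^ (Complex.I * (t : ℂ)) - a p‖ < ε}).toReal / T)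
      atTop :=
  statement14_general N a ha ε hε
end
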